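/- For all N ≥ 0 and all tuples vI = (i_0,…,i_N), vJ = (j_0,…,j_N) ∈ C^{N+1} with i_0 = j_0: (a) S(vI,vJ) = S(vJ,vI); (b) if the set of entries {i_0,…,i_N} is different from the set of entries {j_0,…,j_N}, then S(vI,vJ) = 0. -/

import Mathlib

/-!
Write `vI = x ++ [k]` and `vJ = y ++ [l]`. The recursion for `S(x k, y l)` splits into the term
removing `k` itself, present only when `k = l` and weighted by `∑_p a(x_p, l)`, and the terms
removing an earlier `x_q = l`. By induction the latter are symmetric, so each of them can be
expanded once more, now with respect to `k`; this gives a double sum over the pairs `(q, r)` with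
`x_q = l`, `y_r = k` that is visibly symmetric under exchanging the two tuples. The term with
`k = l` is symmetric because `S(x, y) ≠ 0` forces `x` to be a permutation of `y`, so both
weights are sums over the same multiset; the same fact gives (b).
-/

noncomputable section

/-- Recursive definition of `S(vI,vJ)`, where the second sequence is given in *reversed*
order (so the recursion removes its head, i.e. the last entry `j_N` of `vJ`).  The entry
removed from `vI` is at position `q ∈ {1,…,N}` (the zeroth entry `i₀` is never removed). -/
def Ssym0 {C : Type} [DecidableEq C] (a : C → C → ℂ) : List C → List C → ℂ
  | _, [] => 0
  | vI, [j] => if vI = [j] then 1 else 0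
  | vI, j :: rest =>
    ∑ q : Fin vI.length,
      if q.val ≠ 0 ∧ vI.get q = j then
        (∑ p : Fin vI.length, if p < q then a (vI.get p) j else 0)
          * Ssym0 a (vI.eraseIdx q) rest
      else 0

/-- `S(vI,vJ)` for sequences `vI = (i₀,…,i_N)`, `vJ = (j₀,…,j_N)` with `i₀ = j₀`. -/
def Sfun0 {C : Type} [DecidableEq C] (a : C → C → ℂ) (vI vJ : List C) : ℂ :=
  Ssym0 a vI vJ.reverse

open Finset List

lemma sum_fin_ite_lt_eq_sum_take {α M : Type*} [AddCommMonoid M] (f : α → M) (x : List α)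
    (q : ℕ) :
    (∑ p : Fin x.length, if p.val < q then f x[(p : ℕ)] else 0) = ((x.take q).map f).sum := by
  induction x generalizing q with
  | nil => simp
  | cons c t ih => cases q <;> simp_all [Fin.sum_univ_succ]

section Shapovalov

variable {C : Type} [DecidableEq C] (a : C → C → ℂ)

lemma Sfun0_nil_right (x : List C) : Sfun0 a x [] = 0 := rfl

lemma Sfun0_singleton_right (x : List C) (j : C) : Sfun0 a x [j] = if x = [j] then 1 else 0 := rfl

lemma Sfun0_append_singleton (x y : List C) (j : C) (hy : y ≠ []) :
    Sfun0 a x (y ++ [j]) = ∑ q ∈ Ico 1 x.length,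
      if x[q]? = some j then ((x.take q).map (a · j)).sum * Sfun0 a (x.eraseIdx q) y else 0 := by
  set g : ℕ → ℂ := fun q => if q ≠ 0 ∧ x[q]? = some j then
    ((x.take q).map (a · j)).sum * Sfun0 a (x.eraseIdx q) y else 0
  calc Sfun0 a x (y ++ [j]) = ∑ q : Fin x.length, g q := by
        rw [Sfun0, reverse_append, reverse_singleton, singleton_append,
          Ssym0.eq_3 _ _ _ _ (by simpa using hy)]
        refine Fintype.sum_congr _ _ fun q => ?_
        simp only [g, List.get_eq_getElem, Fin.lt_def, Sfun0, List.getElem?_eq_getElem q.isLt,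
          Option.some_inj, sum_fin_ite_lt_eq_sum_take (a · j)]
    _ = g 0 + ∑ q ∈ Ico 1 x.length, g q := by
        rcases eq_or_ne x [] with rfl | hx
        · simp [g]
        rw [Fin.sum_univ_eq_sum_range g, Finset.sum_range_eq_add_Ico g (List.length_pos_iff.mpr hx)]
    _ = _ := by
        rw [show g 0 = 0 from if_neg (by simp), zero_add]
        refine Finset.sum_congr rfl fun q hq => ?_
        simp only [g, if_congr (and_iff_right (by simp at hq; omega : q ≠ 0)) rfl rfl]

lemma perm_of_Sfun0_ne_zero {x y : List C} (h : Sfun0 a x y ≠ 0) : x ~ y := by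
  induction y using List.reverseRecOn generalizing x with
  | nil => exact absurd (Sfun0_nil_right a x) h
  | append_singleton y j ih =>
    rcases eq_or_ne y [] with rfl | hy
    · rw [nil_append, Sfun0_singleton_right] at h
      obtain ⟨rfl, -⟩ := ite_ne_right_iff.mp h
      exact Perm.refl _
    rw [Sfun0_append_singleton a x y j hy] at h
    obtain ⟨q, -, hne⟩ := Finset.exists_ne_zero_of_sum_ne_zero h
    obtain ⟨hqj, hne⟩ := ite_ne_right_iff.mp hne
    obtain ⟨hqx, rfl⟩ := List.getElem?_eq_some_iff.mp hqj
    calc x ~ x[q] :: x.eraseIdx q := (getElem_cons_eraseIdx_perm hqx).symm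
      _ ~ x[q] :: y := (ih (right_ne_zero_of_mul hne)).cons _
      _ ~ y ++ [x[q]] := (perm_append_singleton _ _).symm

lemma Sfun0_append_singleton_append_singleton (x y : List C) (k j : C) (hx : x ≠ [])
    (hy : y ≠ []) :
    Sfun0 a (x ++ [k]) (y ++ [j]) =
      (if k = j then (x.map (a · j)).sum * Sfun0 a x y else 0) + ∑ q ∈ Ico 1 x.length,
        if x[q]? = some j then ((x.take q).map (a · j)).sum * Sfun0 a (x.eraseIdx q ++ [k]) y
        else 0 := by
  rw [Sfun0_append_singleton a _ y j hy, length_append, length_singleton,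
    Finset.sum_Ico_succ_top (length_pos_iff.mpr hx), add_comm]
  congr 1
  · simp [eraseIdx_append_of_length_le]
  · refine Finset.sum_congr rfl fun q hq => ?_
    have hqx : q < x.length := (Finset.mem_Ico.mp hq).2
    rw [getElem?_append_left hqx, take_append_of_le_length hqx.le,
      eraseIdx_append_of_lt_length hqx]

lemma sum_Sfun0_eraseIdx_append_eq_sum_sum (x y : List C) (k l : C) :
    ∑ q ∈ Ico 1 x.length, (if x[q]? = some l then
      ((x.take q).map (a · l)).sum * Sfun0 a y (x.eraseIdx q ++ [k]) else 0) =
    ∑ q ∈ Ico 1 x.length, ∑ r ∈ Ico 1 y.length, if x[q]? = some l ∧ y[r]? = some k then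
      ((x.take q).map (a · l)).sum * ((y.take r).map (a · k)).sum *
        Sfun0 a (y.eraseIdx r) (x.eraseIdx q) else 0 := by
  refine Finset.sum_congr rfl fun q hq => ?_
  have hq' := Finset.mem_Ico.mp hq
  have hne : x.eraseIdx q ≠ [] := by
    rw [← length_pos_iff, length_eraseIdx_of_lt hq'.2]; omega
  rw [Sfun0_append_singleton a y _ k hne]
  split_ifs with hql
  · simp only [hql, true_and, Finset.mul_sum, mul_ite, mul_zero, mul_assoc]
  · simp [hql]

lemma Sfun0_comm_of_forall_length_lt {x y : List C}
    (ih : ∀ u v : List C, u.length < x.length → Sfun0 a u v = Sfun0 a v u) :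
    Sfun0 a x y = Sfun0 a y x := by
  by_cases hperm : x ~ y
  swap
  · rw [not_imp_comm.mp (perm_of_Sfun0_ne_zero a) hperm,
      not_imp_comm.mp (perm_of_Sfun0_ne_zero a) (mt Perm.symm hperm)]
  obtain rfl | ⟨x, k, rfl⟩ := x.eq_nil_or_concat'
  · rw [nil_perm.mp hperm]
  obtain rfl | hx := eq_or_ne x []
  · rw [nil_append, singleton_perm.mp hperm]
  obtain rfl | ⟨y, l, rfl⟩ := y.eq_nil_or_concat'
  · exact absurd (perm_nil.mp hperm) (by simp)
  have hy : y ≠ [] := by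
    rintro rfl
    simpa [hx] using hperm.length_eq
  have ih' : ∀ u v : List C, u.length ≤ x.length → Sfun0 a u v = Sfun0 a v u :=
    fun u v hu => ih u v (by simp; omega)
  rw [Sfun0_append_singleton_append_singleton a x y k l hx hy,
    Sfun0_append_singleton_append_singleton a y x l k hy hx]
  congr 1
  · by_cases hkl : k = l
    · subst hkl
      rw [if_pos rfl, if_pos rfl, ih' x y le_rfl,
        ((perm_append_right_iff _).mp hperm).map _ |>.sum_eq]
    · rw [if_neg hkl, if_neg (Ne.symm hkl)]
  · calc _ = ∑ q ∈ Ico 1 x.length, (if x[q]? = some l then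
            ((x.take q).map (a · l)).sum * Sfun0 a y (x.eraseIdx q ++ [k]) else 0) := by
          refine Finset.sum_congr rfl fun q hq => ?_
          have hqx := (Finset.mem_Ico.mp hq).2
          rw [ih' _ y (by simp [length_eraseIdx_of_lt hqx]; omega)]
      _ = _ := sum_Sfun0_eraseIdx_append_eq_sum_sum a x y k l
      _ = ∑ r ∈ Ico 1 y.length, ∑ q ∈ Ico 1 x.length,
            if y[r]? = some k ∧ x[q]? = some l then ((y.take r).map (a · k)).sum *
              ((x.take q).map (a · l)).sum * Sfun0 a (x.eraseIdx q) (y.eraseIdx r) else 0 := by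
          rw [Finset.sum_comm]
          refine Finset.sum_congr rfl fun r _ => Finset.sum_congr rfl fun q _ => ?_
          rw [mul_comm (List.sum _), ih' (x.eraseIdx q) _ (length_eraseIdx_le _ _)]
          exact if_congr and_comm rfl rfl
      _ = _ := (sum_Sfun0_eraseIdx_append_eq_sum_sum a y x l k).symm
      _ = _ := Finset.sum_congr rfl fun r _ => by rw [ih' x _ le_rfl]

theorem Sfun0_comm (x y : List C) : Sfun0 a x y = Sfun0 a y x := by
  induction hn : x.length using Nat.strong_induction_on generalizing x y with
  | _ n ih => exact Sfun0_comm_of_forall_length_lt a fun u v hu => ih _ (hn ▸ hu) u v rfl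

end Shapovalov

theorem statement1 {C : Type} [DecidableEq C]
    (a : C → C → ℂ)
    (vI vJ : List C) :
    Sfun0 a vI vJ = Sfun0 a vJ vI ∧
      (vI.toFinset ≠ vJ.toFinset → Sfun0 a vI vJ = 0) :=
  ⟨Sfun0_comm a vI vJ, fun hne => by_contra fun h =>
    hne (toFinset_eq_of_perm _ _ (perm_of_Sfun0_ne_zero a h))⟩

end
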